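/- arXiv:1711.06558 — 2 statements merged into one kernel-verified Lean document; each statement's English description precedes it below -/
import Mathlib

section
/- For any infinite sequence (X_n) of finite connected k-regular graphs with |X_n| → ∞, one has liminf λ₁(X_n) ≥ 2√(k−1), where λ₁ denotes the largest nontrivial adjacency eigenvalue. -/
open SimpleGraph Filter

/-- `l` is an eigenvalue of the real matrix `A`. -/
def Matrix.IsEigenvalue {V : Type*} [Fintype V] (A : Matrix V V ℝ) (l : ℝ) : Prop :=
  ∃ v : V → ℝ, v ≠ 0 ∧ A.mulVec v = l • v

/-- `λ₁(X)`: the largest adjacency eigenvalue different from `k`. -/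
noncomputable def SimpleGraph.lambdaOne {V : Type*} [Fintype V] (G : SimpleGraph V)
    [DecidableRel G.Adj] (k : ℕ) : ℝ :=
  sSup {l : ℝ | (G.adjMatrix ℝ).IsEigenvalue l ∧ l ≠ (k : ℝ)}

open Finset Matrix

/-!
Nilli's proof. Fix an edge `ab` and let `Sᵢ` be the set of vertices at distance `i` from it.
Every vertex of `Sᵢ` has a neighbour in `Sᵢ₋₁` (in `S₀`: the other endpoint), hence at most
`k - 1` neighbours in `Sᵢ₊₁`; so `|Sᵢ₊₁| ≤ (k - 1)|Sᵢ|` and the masses `|Sᵢ| (k - 1)⁻ⁱ` decrease.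
The test function `(k - 1)^(-i/2)` on `Sᵢ` for `i ≤ m`, zero beyond, has Dirichlet energy coming
only from edges between consecutive spheres, and its Rayleigh quotient is at least
`2√(k - 1) (1 - 1/(m + 1))`: the decreasing masses make the last sphere at most a `1/(m + 1)`
share of its norm. A large graph has two edges far apart; the combination of their test functions
that is orthogonal to the constants keeps this bound, and since the eigenvectors for `k` are
constant, expanding it in an eigenbasis bounds `λ₁` from below. Finally let `m → ∞`.
-/

theorem Real.inv_eq_inv_sqrt_sq {x : ℝ} (hx : 0 ≤ x) : x⁻¹ = (√x)⁻¹ ^ 2 := by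
  rw [inv_pow, Real.sq_sqrt hx]

theorem Matrix.IsHermitian.dotProduct_mulVec_le_of_eigen {n : Type*} [Fintype n] [DecidableEq n]
    {A : Matrix n n ℝ} (hA : A.IsHermitian) (g : n → ℝ) {c : ℝ}
    (h : ∀ μ v, v ≠ 0 → A *ᵥ v = μ • v → g ⬝ᵥ v ≠ 0 → μ ≤ c) :
    g ⬝ᵥ (A *ᵥ g) ≤ c * (g ⬝ᵥ g) := by
  set b := hA.eigenvectorBasis
  have parseval (w : n → ℝ) : g ⬝ᵥ w = ∑ i, (g ⬝ᵥ b i) * (b i ⬝ᵥ w) := by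
    simpa [EuclideanSpace.inner_eq_star_dotProduct, dotProduct_comm] using
      (b.sum_inner_mul_inner (WithLp.toLp 2 g) (WithLp.toLp 2 w)).symm
  have hAb (i : n) : b i ⬝ᵥ (A *ᵥ g) = hA.eigenvalues i * (g ⬝ᵥ b i) := by
    rw [dotProduct_mulVec, ← mulVec_transpose, ← conjTranspose_eq_transpose_of_trivial, hA.eq,
      hA.mulVec_eigenvectorBasis, smul_dotProduct, smul_eq_mul, dotProduct_comm]
  rw [parseval, parseval g, mul_sum]
  refine sum_le_sum fun i _ => ?_
  rw [hAb, dotProduct_comm (b i) g, ← mul_assoc, mul_comm _ (hA.eigenvalues i), mul_assoc]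
  by_cases hgi : g ⬝ᵥ b i = 0
  · simp [hgi]
  · have hb0 : (b i : n → ℝ) ≠ 0 := fun h0 => hgi (by rw [h0, dotProduct_zero])
    exact mul_le_mul_of_nonneg_right (h _ _ hb0 (hA.mulVec_eigenvectorBasis i) hgi)
      (mul_self_nonneg _)

namespace SimpleGraph

variable {V : Type*} {G : SimpleGraph V}

variable (G) in
noncomputable def edgeDist (a b y : V) : ℕ := min (G.dist a y) (G.dist b y)

variable {a b y z : V} {i : ℕ}

theorem edgeDist_le_of_adj (h : G.Adj y z) : G.edgeDist a b z ≤ G.edgeDist a b y + 1 := by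
  have ha := h.diff_dist_adj (u := a)
  have hb := h.diff_dist_adj (u := b)
  unfold edgeDist
  omega

theorem exists_adj_dist_eq_of_dist_eq_succ (h : G.dist a y = i + 1) :
    ∃ z, G.Adj z y ∧ G.dist a z = i := by
  obtain ⟨p, hp⟩ := exists_walk_of_dist_ne_zero (G := G) (u := a) (v := y) (by omega)
  have hnil : ¬p.Nil := by rw [Walk.not_nil_iff_lt_length]; omega
  have hle : G.dist a p.penultimate ≤ i := by
    have := dist_le p.dropLast
    rw [Walk.length_dropLast] at this
    omega
  have hge := (Walk.adj_penultimate hnil).diff_dist_adj (u := a)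
  exact ⟨_, Walk.adj_penultimate hnil, by omega⟩

theorem exists_adj_edgeDist_eq_of_edgeDist_eq_succ (h : G.edgeDist a b y = i + 1) :
    ∃ z, G.Adj z y ∧ G.edgeDist a b z = i := by
  suffices ∃ z, G.Adj z y ∧ G.edgeDist a b z ≤ i from
    this.imp fun z ⟨hzy, hz⟩ => ⟨hzy, by have := edgeDist_le_of_adj (a := a) (b := b) hzy; omega⟩
  rcases min_cases (G.dist a y) (G.dist b y) with ⟨hmin, -⟩ | ⟨hmin, -⟩ <;>
    rw [edgeDist, hmin] at h
  · obtain ⟨z, hzy, hz⟩ := exists_adj_dist_eq_of_dist_eq_succ h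
    exact ⟨z, hzy, hz ▸ min_le_left _ _⟩
  · obtain ⟨z, hzy, hz⟩ := exists_adj_dist_eq_of_dist_eq_succ h
    exact ⟨z, hzy, hz ▸ min_le_right _ _⟩

theorem Connected.exists_adj_edgeDist_le (hconn : G.Connected) (hab : G.Adj a b) (y : V) :
    ∃ z, G.Adj y z ∧ G.edgeDist a b z ≤ G.edgeDist a b y := by
  cases h : G.edgeDist a b y with
  | zero =>
    rcases Nat.min_eq_zero_iff.mp h with ha | hb
    · obtain rfl := hconn.dist_eq_zero_iff.mp ha
      exact ⟨b, hab, by simp [edgeDist]⟩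
    · obtain rfl := hconn.dist_eq_zero_iff.mp hb
      exact ⟨a, hab.symm, by simp [edgeDist]⟩
  | succ i =>
    obtain ⟨z, hzy, hz⟩ := exists_adj_edgeDist_eq_of_edgeDist_eq_succ h
    exact ⟨z, hzy.symm, by omega⟩

theorem Connected.dist_le_edgeDist_add_one (hconn : G.Connected) (hab : G.Adj a b) (y : V) :
    G.dist a y ≤ G.edgeDist a b y + 1 := by
  have := hconn.dist_triangle (u := a) (v := b) (w := y)
  rw [dist_eq_one_iff_adj.mpr hab] at this
  unfold edgeDist
  omega

noncomputable def nilliProfile (k m i : ℕ) : ℝ :=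
  if i ≤ m then (√((k : ℝ) - 1))⁻¹ ^ i else 0

theorem nilliProfile_of_lt {k m : ℕ} (hi : m < i) : nilliProfile k m i = 0 :=
  if_neg (not_le.mpr hi)

theorem nilliProfile_mul_self {k m : ℕ} (hk : 1 ≤ k) (hi : i ≤ m) :
    nilliProfile k m i * nilliProfile k m i = ((k : ℝ) - 1)⁻¹ ^ i := by
  rw [Real.inv_eq_inv_sqrt_sq (x := (k : ℝ) - 1) (by simpa using hk), nilliProfile, if_pos hi,
    ← pow_mul, ← mul_pow]
  ring

theorem nilliProfile_sub_succ_sq {k m : ℕ} (hk : 1 ≤ k) (hi : i < m) :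
    (nilliProfile k m i - nilliProfile k m (i + 1)) ^ 2 =
      (1 - (√((k : ℝ) - 1))⁻¹) ^ 2 * ((k : ℝ) - 1)⁻¹ ^ i := by
  rw [Real.inv_eq_inv_sqrt_sq (x := (k : ℝ) - 1) (by simpa using hk), nilliProfile, nilliProfile,
    if_pos hi.le, if_pos (Nat.succ_le_of_lt hi)]
  ring

theorem nilliProfile_sub_succ_sq_self {k m : ℕ} (hk : 1 ≤ k) :
    (nilliProfile k m m - nilliProfile k m (m + 1)) ^ 2 = ((k : ℝ) - 1)⁻¹ ^ m := by
  rw [← nilliProfile_mul_self hk le_rfl, nilliProfile_of_lt m.lt_succ_self, sub_zero, sq]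

variable (G) in
noncomputable def nilliFn (k m : ℕ) (a b y : V) : ℝ := nilliProfile k m (G.edgeDist a b y)

theorem nilliFn_nonneg (k m : ℕ) (a b y : V) : 0 ≤ G.nilliFn k m a b y := by
  unfold nilliFn nilliProfile
  split_ifs <;> positivity

theorem nilliFn_self (k m : ℕ) (a b : V) : G.nilliFn k m a b a = 1 := by
  simp [nilliFn, nilliProfile, edgeDist]

variable [Fintype V]

variable (G) in
noncomputable def edgeSphere (a b : V) (i : ℕ) : Finset V := {y | G.edgeDist a b y = i}

theorem mem_edgeSphere : y ∈ G.edgeSphere a b i ↔ G.edgeDist a b y = i := by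
  simp [edgeSphere]

theorem Connected.card_edgeSphere_zero_le (hconn : G.Connected) : #(G.edgeSphere a b 0) ≤ 2 := by
  classical
  refine (card_le_card (t := {a, b}) fun y hy => ?_).trans card_le_two
  rcases Nat.min_eq_zero_iff.mp (mem_edgeSphere.mp hy) with ha | hb
  · simp [← hconn.dist_eq_zero_iff.mp ha]
  · simp [← hconn.dist_eq_zero_iff.mp hb]

theorem card_eq_sum_card_edgeSphere {R : ℕ} (h : ∀ y, G.edgeDist a b y < R) :
    Fintype.card V = ∑ i ∈ range R, #(G.edgeSphere a b i) :=
  card_eq_sum_card_fiberwise fun y _ => mem_range.mpr (h y)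

theorem sum_comp_edgeDist {m : ℕ} (F : ℕ → ℝ) (hF : ∀ i, m < i → F i = 0) :
    ∑ y, F (G.edgeDist a b y) = ∑ i ∈ range (m + 1), #(G.edgeSphere a b i) * F i := by
  have hF' (y : V) : F (G.edgeDist a b y) =
      ∑ i ∈ range (m + 1), if G.edgeDist a b y = i then F i else 0 := by
    rw [sum_ite_eq]
    split_ifs with hy
    · rfl
    · exact hF _ (by simpa using hy)
  simp_rw [hF', sum_comm (s := univ), ← sum_filter, sum_const, nsmul_eq_mul]
  rfl

theorem dotProduct_self_nilliFn {k : ℕ} (hk : 1 ≤ k) (m : ℕ) (a b : V) :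
    G.nilliFn k m a b ⬝ᵥ G.nilliFn k m a b =
      ∑ i ∈ range (m + 1), #(G.edgeSphere a b i) * ((k : ℝ) - 1)⁻¹ ^ i := by
  simp only [dotProduct, nilliFn]
  rw [sum_comp_edgeDist (fun i => nilliProfile k m i * nilliProfile k m i)
    fun i hi => by rw [nilliProfile_of_lt hi, mul_zero]]
  exact sum_congr rfl fun i hi =>
    by rw [nilliProfile_mul_self hk (Nat.lt_succ_iff.mp (mem_range.mp hi))]

variable [DecidableRel G.Adj] {k : ℕ}

variable (G) in
noncomputable def dirichletEnergy (f : V → ℝ) : ℝ :=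
  (∑ y, ∑ z, if G.Adj y z then (f y - f z) ^ 2 else 0) / 2

theorem IsRegularOfDegree.lapMatrix_mulVec [DecidableEq V] (hreg : G.IsRegularOfDegree k)
    (v : V → ℝ) : G.lapMatrix ℝ *ᵥ v = (k : ℝ) • v - G.adjMatrix ℝ *ᵥ v := by
  ext y
  simp [lapMatrix, sub_mulVec, degMatrix_mulVec_apply, hreg y]

theorem IsRegularOfDegree.eigenvalue_le (hreg : G.IsRegularOfDegree k) {l : ℝ}
    (hl : (G.adjMatrix ℝ).IsEigenvalue l) : l ≤ k := by
  classical
  obtain ⟨v, hv0, hv⟩ := hl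
  have hpsd := (posSemidef_lapMatrix ℝ G).dotProduct_mulVec_nonneg v
  rw [star_trivial, hreg.lapMatrix_mulVec, hv, ← sub_smul,
    dotProduct_smul, smul_eq_mul] at hpsd
  have hvv : 0 < v ⬝ᵥ v := by simpa using dotProduct_self_star_pos_iff.mpr hv0
  nlinarith

theorem IsRegularOfDegree.lambdaOne_le (hreg : G.IsRegularOfDegree k) : G.lambdaOne k ≤ k :=
  Real.sSup_le (fun _ hl => hreg.eigenvalue_le hl.1) k.cast_nonneg

theorem IsRegularOfDegree.le_lambdaOne (hreg : G.IsRegularOfDegree k) {l : ℝ}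
    (hl : (G.adjMatrix ℝ).IsEigenvalue l) (hlk : l ≠ k) : l ≤ G.lambdaOne k :=
  le_csSup ⟨k, fun _ hl => hreg.eigenvalue_le hl.1⟩ ⟨hl, hlk⟩

theorem Connected.eq_of_adjMatrix_mulVec_eq_smul (hconn : G.Connected)
    (hreg : G.IsRegularOfDegree k) {v : V → ℝ} (hv : G.adjMatrix ℝ *ᵥ v = (k : ℝ) • v)
    (x y : V) : v x = v y := by
  classical
  have hL : G.lapMatrix ℝ *ᵥ v = 0 := by
    rw [hreg.lapMatrix_mulVec, hv, sub_self]
  exact (lapMatrix_mulVec_eq_zero_iff_forall_reachable G).mp hL x y (hconn x y)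

theorem Connected.dotProduct_adjMatrix_mulVec_le_lambdaOne (hconn : G.Connected)
    (hreg : G.IsRegularOfDegree k) {g : V → ℝ} (hg : ∑ y, g y = 0) :
    g ⬝ᵥ (G.adjMatrix ℝ *ᵥ g) ≤ G.lambdaOne k * (g ⬝ᵥ g) := by
  classical
  refine (G.isHermitian_adjMatrix ℝ).dotProduct_mulVec_le_of_eigen g fun μ v hv0 hv hgv => ?_
  refine hreg.le_lambdaOne ⟨v, hv0, hv⟩ fun hμ => hgv ?_
  obtain ⟨x⟩ := hconn.nonempty
  have hconst : v = fun _ => v x :=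
    funext fun y => hconn.eq_of_adjMatrix_mulVec_eq_smul hreg (hμ ▸ hv) y x
  rw [hconst]
  simp only [dotProduct, ← sum_mul, hg, zero_mul]

theorem IsRegularOfDegree.dotProduct_adjMatrix_mulVec (hreg : G.IsRegularOfDegree k)
    (f : V → ℝ) : f ⬝ᵥ (G.adjMatrix ℝ *ᵥ f) = k * (f ⬝ᵥ f) - G.dirichletEnergy f := by
  classical
  rw [dirichletEnergy, ← lapMatrix_toLinearMap₂', toLinearMap₂'_apply',
    hreg.lapMatrix_mulVec, dotProduct_sub, dotProduct_smul, smul_eq_mul,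
    sub_sub_cancel]

theorem Connected.card_adj_edgeDist_eq_succ_lt (hconn : G.Connected)
    (hreg : G.IsRegularOfDegree k) (hab : G.Adj a b) (y : V) :
    #{z | G.Adj y z ∧ G.edgeDist a b z = G.edgeDist a b y + 1} < k := by
  obtain ⟨z, hyz, hz⟩ := hconn.exists_adj_edgeDist_le hab y
  have hlt : #{w ∈ G.neighborFinset y | G.edgeDist a b w = G.edgeDist a b y + 1} <
      #(G.neighborFinset y) :=
    card_lt_card <| filter_ssubset.mpr ⟨z, (G.mem_neighborFinset y z).mpr hyz, by omega⟩
  rwa [card_neighborFinset_eq_degree, hreg y, neighborFinset_eq_filter, filter_filter] at hlt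

theorem Connected.card_edgeSphere_succ_le (hconn : G.Connected) (hreg : G.IsRegularOfDegree k)
    (hab : G.Adj a b) (i : ℕ) :
    #(G.edgeSphere a b (i + 1)) ≤ (k - 1) * #(G.edgeSphere a b i) := by
  classical
  have hsub : G.edgeSphere a b (i + 1) ⊆ (G.edgeSphere a b i).biUnion
      fun y => {z | G.Adj y z ∧ G.edgeDist a b z = G.edgeDist a b y + 1} := by
    intro z hz
    obtain ⟨y, hyz, hy⟩ := exists_adj_edgeDist_eq_of_edgeDist_eq_succ (mem_edgeSphere.mp hz)
    simp only [mem_biUnion, mem_filter, mem_univ, true_and, mem_edgeSphere]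
    exact ⟨y, hy, hyz, by rw [mem_edgeSphere.mp hz, hy]⟩
  calc #(G.edgeSphere a b (i + 1))
      ≤ ∑ y ∈ G.edgeSphere a b i,
          #{z | G.Adj y z ∧ G.edgeDist a b z = G.edgeDist a b y + 1} :=
        (card_le_card hsub).trans card_biUnion_le
    _ ≤ ∑ _y ∈ G.edgeSphere a b i, (k - 1) :=
        sum_le_sum fun y _ => Nat.le_sub_one_of_lt (hconn.card_adj_edgeDist_eq_succ_lt hreg hab y)
    _ = (k - 1) * #(G.edgeSphere a b i) := by rw [sum_const, smul_eq_mul, mul_comm]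

theorem Connected.card_edgeSphere_le (hconn : G.Connected) (hreg : G.IsRegularOfDegree k)
    (hab : G.Adj a b) (i : ℕ) : #(G.edgeSphere a b i) ≤ 2 * (k - 1) ^ i := by
  induction i with
  | zero => simpa using hconn.card_edgeSphere_zero_le
  | succ i ih =>
    calc #(G.edgeSphere a b (i + 1)) ≤ (k - 1) * #(G.edgeSphere a b i) :=
          hconn.card_edgeSphere_succ_le hreg hab i
      _ ≤ (k - 1) * (2 * (k - 1) ^ i) := Nat.mul_le_mul_left _ ih
      _ = 2 * (k - 1) ^ (i + 1) := by ring

theorem Connected.card_le_of_forall_edgeDist_lt (hconn : G.Connected)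
    (hreg : G.IsRegularOfDegree k) (hab : G.Adj a b) {R : ℕ} (h : ∀ y, G.edgeDist a b y < R) :
    Fintype.card V ≤ ∑ i ∈ range R, 2 * (k - 1) ^ i := by
  rw [card_eq_sum_card_edgeSphere h]
  exact sum_le_sum fun i _ => hconn.card_edgeSphere_le hreg hab i

theorem Connected.antitone_card_edgeSphere_mul_inv_pow (hconn : G.Connected)
    (hreg : G.IsRegularOfDegree k) (hk : 2 ≤ k) (hab : G.Adj a b) :
    Antitone fun i => (#(G.edgeSphere a b i) : ℝ) * ((k : ℝ) - 1)⁻¹ ^ i := by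
  have hk1 : (0 : ℝ) < k - 1 := by
    have : (2 : ℝ) ≤ k := by exact_mod_cast hk
    linarith
  refine antitone_nat_of_succ_le fun i => ?_
  have h := (Nat.cast_le (α := ℝ)).mpr (hconn.card_edgeSphere_succ_le hreg hab i)
  push_cast [Nat.cast_sub (by omega : 1 ≤ k)] at h
  calc (#(G.edgeSphere a b (i + 1)) : ℝ) * ((k : ℝ) - 1)⁻¹ ^ (i + 1)
      ≤ ((k : ℝ) - 1) * #(G.edgeSphere a b i) * ((k : ℝ) - 1)⁻¹ ^ (i + 1) := by gcongr
    _ = #(G.edgeSphere a b i) * ((k : ℝ) - 1)⁻¹ ^ i := by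
          rw [pow_succ]; field_simp [hk1.ne']

theorem Connected.dirichletEnergy_comp_edgeDist_le (hconn : G.Connected)
    (hreg : G.IsRegularOfDegree k) (hab : G.Adj a b) (φ : ℕ → ℝ) :
    G.dirichletEnergy (fun y => φ (G.edgeDist a b y)) ≤
      ((k : ℝ) - 1) * ∑ y, (φ (G.edgeDist a b y) - φ (G.edgeDist a b y + 1)) ^ 2 := by
  set d := G.edgeDist a b
  set δ : ℕ → ℝ := fun i => (φ i - φ (i + 1)) ^ 2
  -- along an edge `d` changes by at most one, so each edge contributes `δ` at its lower end
  have hsplit (y z : V) : (if G.Adj y z then (φ (d y) - φ (d z)) ^ 2 else 0) =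
      (if G.Adj y z ∧ d z = d y + 1 then δ (d y) else 0) +
        (if G.Adj z y ∧ d y = d z + 1 then δ (d z) else 0) := by
    by_cases hyz : G.Adj y z
    · have h₁ : d z ≤ d y + 1 := edgeDist_le_of_adj hyz
      have h₂ : d y ≤ d z + 1 := edgeDist_le_of_adj hyz.symm
      rcases Nat.lt_trichotomy (d y) (d z) with h | h | h
      · rw [if_pos hyz, if_pos ⟨hyz, by omega⟩, if_neg (by omega), show d z = d y + 1 by omega]
        ring
      · rw [if_pos hyz, if_neg (by omega), if_neg (by omega), h]
        ring
      · rw [if_pos hyz, if_neg (by omega), if_pos ⟨hyz.symm, by omega⟩, show d y = d z + 1 by omega]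
        simp only [δ]
        ring
    · simp [hyz, G.adj_comm z y]
  have hcount (y : V) : (∑ z, if G.Adj y z ∧ d z = d y + 1 then δ (d y) else 0) ≤
      ((k : ℝ) - 1) * δ (d y) := by
    rw [← sum_filter, sum_const, nsmul_eq_mul]
    refine mul_le_mul_of_nonneg_right ?_ (sq_nonneg _)
    have h : (#{z | G.Adj y z ∧ d z = d y + 1} : ℝ) + 1 ≤ k := by
      exact_mod_cast hconn.card_adj_edgeDist_eq_succ_lt hreg hab y
    linarith
  rw [dirichletEnergy, div_le_iff₀ two_pos]
  calc (∑ y, ∑ z, if G.Adj y z then (φ (d y) - φ (d z)) ^ 2 else 0)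
      = 2 * ∑ y, ∑ z, if G.Adj y z ∧ d z = d y + 1 then δ (d y) else 0 := by
        simp_rw [hsplit, sum_add_distrib]
        rw [sum_comm (f := fun y z => if G.Adj z y ∧ d y = d z + 1 then δ (d z) else 0)]
        ring
    _ ≤ 2 * ∑ y, ((k : ℝ) - 1) * δ (d y) := by gcongr with y; exact hcount y
    _ = ((k : ℝ) - 1) * (∑ y, δ (d y)) * 2 := by rw [← mul_sum, mul_comm]

theorem Connected.dirichletEnergy_nilliFn_le (hconn : G.Connected)
    (hreg : G.IsRegularOfDegree k) (hab : G.Adj a b) (m : ℕ) :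
    G.dirichletEnergy (G.nilliFn k m a b) ≤
      ((k : ℝ) - 1) * ((1 - (√((k : ℝ) - 1))⁻¹) ^ 2 *
        ∑ i ∈ range m, #(G.edgeSphere a b i) * ((k : ℝ) - 1)⁻¹ ^ i +
          #(G.edgeSphere a b m) * ((k : ℝ) - 1)⁻¹ ^ m) := by
  have hk : 1 ≤ k := hreg a ▸ (G.degree_pos_iff_exists_adj a).mpr ⟨b, hab⟩
  refine (hconn.dirichletEnergy_comp_edgeDist_le hreg hab (nilliProfile k m)).trans_eq ?_
  have hvanish (i : ℕ) (hi : m < i) :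
      (nilliProfile k m i - nilliProfile k m (i + 1)) ^ 2 = 0 := by
    rw [nilliProfile_of_lt hi, nilliProfile_of_lt (hi.trans i.lt_succ_self), sub_zero, sq, mul_zero]
  rw [sum_comp_edgeDist _ hvanish, sum_range_succ, nilliProfile_sub_succ_sq_self hk, mul_sum,
    sum_congr rfl fun i hi => by rw [nilliProfile_sub_succ_sq hk (mem_range.mp hi)]]
  simp only [mul_left_comm]

theorem Connected.le_dotProduct_adjMatrix_mulVec_nilliFn (hconn : G.Connected)
    (hreg : G.IsRegularOfDegree k) (hk : 2 ≤ k) (hab : G.Adj a b) (m : ℕ) :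
    2 * √((k : ℝ) - 1) * (1 - 1 / (m + 1)) * (G.nilliFn k m a b ⬝ᵥ G.nilliFn k m a b) ≤
      G.nilliFn k m a b ⬝ᵥ (G.adjMatrix ℝ *ᵥ G.nilliFn k m a b) := by
  set r := √((k : ℝ) - 1)
  have hk1 : (1 : ℝ) ≤ k - 1 := by
    have : (2 : ℝ) ≤ k := by exact_mod_cast hk
    linarith
  have hr2 : r ^ 2 = k - 1 := Real.sq_sqrt (by linarith)
  have hr : 0 < r := Real.sqrt_pos.mpr (by linarith)
  set A := ∑ i ∈ range m, (#(G.edgeSphere a b i) : ℝ) * ((k : ℝ) - 1)⁻¹ ^ i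
  set B := (#(G.edgeSphere a b m) : ℝ) * ((k : ℝ) - 1)⁻¹ ^ m
  have henergy := hconn.dirichletEnergy_nilliFn_le hreg hab m
  have hAB : m * B ≤ A := by
    have hanti := hconn.antitone_card_edgeSphere_mul_inv_pow hreg hk hab
    calc (m : ℝ) * B = ∑ _i ∈ range m, B := by rw [sum_const, card_range, nsmul_eq_mul]
      _ ≤ A := sum_le_sum fun i hi => hanti (mem_range.mp hi).le
  have hA : 0 ≤ A := sum_nonneg fun i _ => by positivity
  have hB : 0 ≤ B := by positivity
  have hcoef : ((k : ℝ) - 1) * (1 - r⁻¹) ^ 2 = k - 2 * r := by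
    rw [← hr2]
    field_simp
    linear_combination hr2
  have hm : (1 - 1 / ((m : ℝ) + 1)) * (A + B) ≤ A := by
    rw [one_sub_div (by positivity), add_sub_cancel_right, div_mul_eq_mul_div,
      div_le_iff₀ (by positivity)]
    linarith
  rw [hreg.dotProduct_adjMatrix_mulVec,
    dotProduct_self_nilliFn (by omega), sum_range_succ]
  nlinarith

theorem dotProduct_adjMatrix_mulVec_eq_zero_of_one_lt_dist {f g : V → ℝ}
    (hsep : ∀ y z, f y ≠ 0 → g z ≠ 0 → 1 < G.dist y z) : f ⬝ᵥ (G.adjMatrix ℝ *ᵥ g) = 0 := by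
  rw [dotProduct_mulVec_adjMatrix]
  refine sum_eq_zero fun y _ => sum_eq_zero fun z _ => ?_
  split_ifs with hyz
  · by_contra h
    have := hsep y z (left_ne_zero_of_mul h) (right_ne_zero_of_mul h)
    rw [dist_eq_one_iff_adj.mpr hyz] at this
    exact this.false
  · rfl

theorem Connected.le_lambdaOne_of_separated (hconn : G.Connected) (hreg : G.IsRegularOfDegree k)
    {f g : V → ℝ} {s : ℝ} (hsep : ∀ y z, f y ≠ 0 → g z ≠ 0 → 1 < G.dist y z) (hf0 : f ≠ 0)
    (hg0 : ∑ y, g y ≠ 0) (hf : s * (f ⬝ᵥ f) ≤ f ⬝ᵥ (G.adjMatrix ℝ *ᵥ f))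
    (hg : s * (g ⬝ᵥ g) ≤ g ⬝ᵥ (G.adjMatrix ℝ *ᵥ g)) : s ≤ G.lambdaOne k := by
  set α := ∑ y, g y
  set β := ∑ y, f y
  set φ := α • f - β • g
  have hφ : ∑ y, φ y = 0 := by
    simp only [φ, Pi.sub_apply, Pi.smul_apply, smul_eq_mul, sum_sub_distrib, ← mul_sum]
    ring
  have hfg : f ⬝ᵥ (G.adjMatrix ℝ *ᵥ g) = 0 :=
    dotProduct_adjMatrix_mulVec_eq_zero_of_one_lt_dist hsep
  have hgf : g ⬝ᵥ (G.adjMatrix ℝ *ᵥ f) = 0 := dotProduct_adjMatrix_mulVec_eq_zero_of_one_lt_dist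
    fun y z hy hz => dist_comm (G := G) ▸ hsep z y hz hy
  have hfg' : f ⬝ᵥ g = 0 := sum_eq_zero fun y _ => by
    by_contra hy
    simpa using hsep y y (left_ne_zero_of_mul hy) (right_ne_zero_of_mul hy)
  have hAφ : φ ⬝ᵥ (G.adjMatrix ℝ *ᵥ φ) =
      α ^ 2 * (f ⬝ᵥ (G.adjMatrix ℝ *ᵥ f)) + β ^ 2 * (g ⬝ᵥ (G.adjMatrix ℝ *ᵥ g)) := by
    simp only [φ, mulVec_sub, mulVec_smul, dotProduct_sub, sub_dotProduct, dotProduct_smul,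
      smul_dotProduct, smul_eq_mul, hfg, hgf]
    ring
  have hφφ : φ ⬝ᵥ φ = α ^ 2 * (f ⬝ᵥ f) + β ^ 2 * (g ⬝ᵥ g) := by
    simp only [φ, dotProduct_sub, sub_dotProduct, dotProduct_smul, smul_dotProduct, smul_eq_mul,
      hfg', dotProduct_comm g f]
    ring
  have hpos : 0 < φ ⬝ᵥ φ := by
    have hf' : 0 < f ⬝ᵥ f := by simpa using dotProduct_self_star_pos_iff.mpr hf0
    have hg' : 0 ≤ g ⬝ᵥ g := by simpa using dotProduct_self_star_nonneg g
    rw [hφφ]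
    positivity
  refine le_of_mul_le_mul_right ?_ hpos
  calc s * (φ ⬝ᵥ φ) ≤ φ ⬝ᵥ (G.adjMatrix ℝ *ᵥ φ) := by
        rw [hAφ, hφφ]
        nlinarith [sq_nonneg α, sq_nonneg β]
    _ ≤ G.lambdaOne k * (φ ⬝ᵥ φ) := hconn.dotProduct_adjMatrix_mulVec_le_lambdaOne hreg hφ

theorem Connected.le_lambdaOne_of_card_gt (hconn : G.Connected) (hreg : G.IsRegularOfDegree k)
    (hk : 2 ≤ k) (m : ℕ) (hV : ∑ i ∈ range (2 * m + 4), 2 * (k - 1) ^ i < Fintype.card V) :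
    2 * √((k : ℝ) - 1) * (1 - 1 / (m + 1)) ≤ G.lambdaOne k := by
  have hadj (x : V) : ∃ x', G.Adj x x' := (G.degree_pos_iff_exists_adj x).mp (by rw [hreg x]; omega)
  obtain ⟨x⟩ := hconn.nonempty
  obtain ⟨x', hx⟩ := hadj x
  obtain ⟨y, hy⟩ : ∃ y, 2 * m + 4 ≤ G.edgeDist x x' y := by
    by_contra! h
    have := hconn.card_le_of_forall_edgeDist_lt hreg hx h
    omega
  obtain ⟨y', hy'⟩ := hadj y
  have hsupp {a b : V} (hab : G.Adj a b) {z : V} (hz : G.nilliFn k m a b z ≠ 0) :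
      G.dist a z ≤ m + 1 := by
    have := hconn.dist_le_edgeDist_add_one hab z
    by_contra
    exact hz (nilliProfile_of_lt (by omega))
  refine hconn.le_lambdaOne_of_separated hreg (f := G.nilliFn k m x x') (g := G.nilliFn k m y y')
    (fun u w hu hw => ?_) (Function.ne_iff.mpr ⟨x, by simp [nilliFn_self]⟩)
    (sum_pos' (fun z _ => nilliFn_nonneg k m y y' z) ⟨y, mem_univ y, by simp [nilliFn_self]⟩).ne'
    (hconn.le_dotProduct_adjMatrix_mulVec_nilliFn hreg hk hx m)
    (hconn.le_dotProduct_adjMatrix_mulVec_nilliFn hreg hk hy' m)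
  -- the supports lie within distance `m + 1` of `x` and of `y`, which are `2m + 4` apart
  have hxu := hsupp hx hu
  have hyw := hsupp hy' hw
  have hxy : G.edgeDist x x' y ≤ G.dist x y := min_le_left _ _
  have h₁ := hconn.dist_triangle (u := x) (v := u) (w := y)
  have h₂ := hconn.dist_triangle (u := u) (v := w) (w := y)
  rw [dist_comm (u := w)] at h₂
  omega

end SimpleGraph

/-- Asymptotic Alon–Boppana: for a sequence of finite connected `k`-regular graphs whose
sizes tend to infinity, `liminf λ₁(Xₙ) ≥ 2√(k-1)`. -/
theorem alon_boppana_liminf (k : ℕ) (hk : 3 ≤ k)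
    (V : ℕ → Type) [inst : ∀ n, Fintype (V n)] (X : ∀ n, SimpleGraph (V n))
    [instd : ∀ n, DecidableRel (X n).Adj]
    (hconn : ∀ n, (X n).Connected) (hreg : ∀ n, (X n).IsRegularOfDegree k)
    (hcard : Tendsto (fun n => Fintype.card (V n)) atTop atTop) :
    2 * Real.sqrt ((k : ℝ) - 1) ≤ liminf (fun n => (X n).lambdaOne k) atTop := by
  have hcobdd : IsCoboundedUnder (· ≥ ·) atTop fun n => (X n).lambdaOne k :=
    isCoboundedUnder_ge_of_le atTop fun n => (hreg n).lambdaOne_le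
  have hm (m : ℕ) :
      2 * √((k : ℝ) - 1) * (1 - 1 / ((m : ℝ) + 1)) ≤ liminf (fun n => (X n).lambdaOne k) atTop :=
    le_liminf_of_le hcobdd <| (hcard.eventually_gt_atTop _).mono fun n hn =>
      (hconn n).le_lambdaOne_of_card_gt (hreg n) (by omega) m hn
  have hlim : Tendsto (fun m : ℕ => 2 * √((k : ℝ) - 1) * (1 - 1 / ((m : ℝ) + 1))) atTop
      (nhds (2 * √((k : ℝ) - 1))) := by
    simpa using (tendsto_const_nhds (x := 2 * √((k : ℝ) - 1))).mul
      ((tendsto_const_nhds (x := (1 : ℝ))).sub tendsto_one_div_add_atTop_nhds_zero_nat)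
  exact le_of_tendsto' hlim hm
end

section
/- Let X be a k-regular graph whose adjacency matrix eigenvalues other than ±k all have absolute value at most λ. Then for any two vertex subsets S, T, one has | |E(S,T)| − k|S||T|/n | ≤ λ·√(|S||T|), where n = |X| and E(S,T) is the set of ordered pairs (s,t) with s ∈ S, t ∈ T adjacent. (Expander mixing lemma.) -/
/-!
Expand the indicator vectors `1_S`, `1_T` in an orthonormal eigenbasis `(e_j)` of the adjacency
matrix `A`: then `|E(S,T)| = 1_S ⬝ A 1_T = ∑ j, μ_j ⟨e_j, 1_S⟩ ⟨e_j, 1_T⟩`. On a connected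
`k`-regular graph the eigenvectors for `k` lie in the kernel of the Laplacian `k - A`, hence are
constant, so exactly one basis vector, `±1/√n`, has eigenvalue `k`; its term is `k |S| |T| / n`.
All other terms have `|μ_j| ≤ λ`, and Cauchy–Schwarz together with Bessel's inequality bounds their
sum by `λ ‖1_S‖ ‖1_T‖ = λ √(|S| |T|)`.
-/

open SimpleGraph Finset

/-- A graph is bipartite if its vertices can be partitioned into two sets such that
every edge joins the two sides. -/
def SimpleGraph.IsBipartite' {V : Type*} (G : SimpleGraph V) : Prop :=
  ∃ S : Set V, ∀ a b, G.Adj a b → (a ∈ S ↔ b ∉ S)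

open Matrix

theorem Finset.abs_sum_mul_mul_le {ι : Type*} (s : Finset ι) {μ : ι → ℝ} {lam : ℝ}
    (hlam : 0 ≤ lam) (hμ : ∀ j ∈ s, |μ j| ≤ lam) (a b : ι → ℝ) :
    |∑ j ∈ s, μ j * (a j * b j)| ≤ lam * (√(∑ j ∈ s, a j ^ 2) * √(∑ j ∈ s, b j ^ 2)) :=
  calc |∑ j ∈ s, μ j * (a j * b j)|
      ≤ ∑ j ∈ s, |μ j| * (|a j| * |b j|) := by
        simpa only [abs_mul] using abs_sum_le_sum_abs (fun j => μ j * (a j * b j)) s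
    _ ≤ ∑ j ∈ s, lam * (|a j| * |b j|) :=
        sum_le_sum fun j hj => mul_le_mul_of_nonneg_right (hμ j hj) (by positivity)
    _ ≤ lam * (√(∑ j ∈ s, a j ^ 2) * √(∑ j ∈ s, b j ^ 2)) := by
        rw [← mul_sum]
        gcongr
        simpa only [sq_abs] using
          Real.sum_mul_le_sqrt_mul_sqrt s (fun j => |a j|) (fun j => |b j|)

namespace Matrix

variable {n : Type*} [Fintype n]

theorem dotProduct_indicator_one (x : n → ℝ) (s : Finset n) :
    x ⬝ᵥ (s : Set n).indicator 1 = ∑ i ∈ s, x i := by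
  classical
  simp [dotProduct, Set.indicator_apply]

theorem indicator_one_dotProduct_self (s : Finset n) :
    (s : Set n).indicator (1 : n → ℝ) ⬝ᵥ (s : Set n).indicator 1 = #s := by
  rw [dotProduct_indicator_one]
  simp +contextual [Set.indicator_of_mem]

theorem sq_dotProduct_of_const {u w : n → ℝ} (hu : ∀ a b, u a = u b) (hw : ∀ a b, w a = w b) :
    (u ⬝ᵥ w) ^ 2 = (u ⬝ᵥ u) * (w ⬝ᵥ w) := by
  simp only [dotProduct, sq, sum_mul_sum]
  refine sum_congr rfl fun a _ => sum_congr rfl fun b _ => ?_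
  rw [hu b a, hw a b]
  ring

theorem dotProduct_mul_dotProduct_of_const {u : n → ℝ} (hu : ∀ a b, u a = u b)
    (hunit : u ⬝ᵥ u = 1) (x y : n → ℝ) :
    (u ⬝ᵥ x) * (u ⬝ᵥ y) = (∑ i, x i) * (∑ i, y i) / Fintype.card n := by
  obtain ⟨a⟩ : Nonempty n := by
    by_contra h
    rw [not_nonempty_iff] at h
    simp [dotProduct] at hunit
  have hconst (z : n → ℝ) : u ⬝ᵥ z = u a * ∑ i, z i := by
    simp only [dotProduct, mul_sum, hu _ a]
  have hcard : Fintype.card n * u a ^ 2 = 1 := by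
    rw [← hunit, hconst]
    simp only [hu _ a, sum_const, card_univ, nsmul_eq_mul]
    ring
  rw [hconst, hconst, eq_div_iff (left_ne_zero_of_mul_eq_one hcard)]
  linear_combination (∑ i, x i) * (∑ i, y i) * hcard

end Matrix

theorem Finset.sum_indicator_one {n : Type*} [Fintype n] (s : Finset n) :
    ∑ i, (s : Set n).indicator (1 : n → ℝ) i = #s := by
  rw [← one_dotProduct, dotProduct_indicator_one]
  simp

namespace Matrix.IsHermitian

variable {n : Type*} [Fintype n] [DecidableEq n] {A : Matrix n n ℝ} (hA : A.IsHermitian)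
include hA

theorem isEigenvalue_eigenvalues (j : n) : A.IsEigenvalue (hA.eigenvalues j) :=
  ⟨_, fun h => hA.eigenvectorBasis.orthonormal.ne_zero j (WithLp.ofLp_injective 2 h),
    hA.mulVec_eigenvectorBasis j⟩

theorem eigenvectorBasis_dotProduct_eigenvectorBasis (i j : n) :
    ⇑(hA.eigenvectorBasis i) ⬝ᵥ ⇑(hA.eigenvectorBasis j) = if i = j then 1 else 0 := by
  simpa [EuclideanSpace.inner_eq_star_dotProduct, dotProduct_comm] using
    (orthonormal_iff_ite.mp hA.eigenvectorBasis.orthonormal) i j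

theorem sum_eigenvectorBasis_dotProduct_mul (x y : n → ℝ) :
    ∑ j, (⇑(hA.eigenvectorBasis j) ⬝ᵥ x) * (⇑(hA.eigenvectorBasis j) ⬝ᵥ y) = x ⬝ᵥ y := by
  simpa [EuclideanSpace.inner_eq_star_dotProduct, dotProduct_comm] using
    hA.eigenvectorBasis.sum_inner_mul_inner (WithLp.toLp 2 x) (WithLp.toLp 2 y)

theorem eigenvectorBasis_dotProduct_mulVec (j : n) (y : n → ℝ) :
    ⇑(hA.eigenvectorBasis j) ⬝ᵥ (A *ᵥ y) =
      hA.eigenvalues j * (⇑(hA.eigenvectorBasis j) ⬝ᵥ y) := by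
  have hAT : Aᵀ = A := (conjTranspose_eq_transpose_of_trivial A).symm.trans hA.eq
  rw [dotProduct_mulVec, ← mulVec_transpose, hAT, hA.mulVec_eigenvectorBasis, smul_dotProduct,
    smul_eq_mul]

theorem dotProduct_mulVec_eq_sum (x y : n → ℝ) :
    x ⬝ᵥ (A *ᵥ y) = ∑ j, hA.eigenvalues j *
      ((⇑(hA.eigenvectorBasis j) ⬝ᵥ x) * (⇑(hA.eigenvectorBasis j) ⬝ᵥ y)) := by
  rw [← hA.sum_eigenvectorBasis_dotProduct_mul]
  refine sum_congr rfl fun j _ => ?_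
  rw [hA.eigenvectorBasis_dotProduct_mulVec]
  ring

theorem exists_eigenvalues_eq_of_mulVec_eq_smul {v : n → ℝ} {c : ℝ} (hv : v ≠ 0)
    (h : A *ᵥ v = c • v) : ∃ j, hA.eigenvalues j = c := by
  obtain ⟨j, hj⟩ : ∃ j, ⇑(hA.eigenvectorBasis j) ⬝ᵥ v ≠ 0 := by
    by_contra! h0
    apply hv
    simpa [h0] using (hA.sum_eigenvectorBasis_dotProduct_mul v v).symm
  refine ⟨j, mul_right_cancel₀ hj ?_⟩
  rw [← eigenvectorBasis_dotProduct_mulVec, h, dotProduct_smul, smul_eq_mul]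

theorem eq_of_eigenvectorBasis_const {i j : n}
    (hi : ∀ a b, hA.eigenvectorBasis i a = hA.eigenvectorBasis i b)
    (hj : ∀ a b, hA.eigenvectorBasis j a = hA.eigenvectorBasis j b) : i = j := by
  by_contra hij
  simpa [eigenvectorBasis_dotProduct_eigenvectorBasis, hij] using sq_dotProduct_of_const hi hj

theorem abs_dotProduct_mulVec_sub_le {j₀ : n} {lam : ℝ} (hlam0 : 0 ≤ lam)
    (hlam : ∀ j ≠ j₀, |hA.eigenvalues j| ≤ lam) (x y : n → ℝ) :
    |x ⬝ᵥ (A *ᵥ y) - hA.eigenvalues j₀ *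
        ((⇑(hA.eigenvectorBasis j₀) ⬝ᵥ x) * (⇑(hA.eigenvectorBasis j₀) ⬝ᵥ y))| ≤
      lam * √((x ⬝ᵥ x) * (y ⬝ᵥ y)) := by
  have hsq (z : n → ℝ) :
      ∑ j ∈ univ.erase j₀, (⇑(hA.eigenvectorBasis j) ⬝ᵥ z) ^ 2 ≤ z ⬝ᵥ z := by
    rw [← hA.sum_eigenvectorBasis_dotProduct_mul z z]
    simp_rw [sq]
    exact sum_le_sum_of_subset_of_nonneg (erase_subset _ _) fun _ _ _ => mul_self_nonneg _
  rw [hA.dotProduct_mulVec_eq_sum, ← add_sum_erase _ _ (mem_univ j₀), add_sub_cancel_left,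
    Real.sqrt_mul (show 0 ≤ x ⬝ᵥ x from Fintype.sum_nonneg fun _ => mul_self_nonneg _)]
  calc _ ≤ lam * (√(∑ j ∈ univ.erase j₀, (⇑(hA.eigenvectorBasis j) ⬝ᵥ x) ^ 2) *
          √(∑ j ∈ univ.erase j₀, (⇑(hA.eigenvectorBasis j) ⬝ᵥ y) ^ 2)) :=
        abs_sum_mul_mul_le _ hlam0 (fun j hj => hlam j (ne_of_mem_erase hj)) _ _
    _ ≤ lam * (√(x ⬝ᵥ x) * √(y ⬝ᵥ y)) := by gcongr <;> exact hsq _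

end Matrix.IsHermitian

namespace SimpleGraph

theorem nontrivial_of_not_isBipartite' {V : Type*} {G : SimpleGraph V}
    (h : ¬ G.IsBipartite') : Nontrivial V := by
  by_contra hV
  rw [not_nontrivial_iff_subsingleton] at hV
  exact h ⟨∅, fun a b hab => absurd (Subsingleton.elim a b) hab.ne⟩

variable {V : Type*} [Fintype V] {G : SimpleGraph V} [DecidableRel G.Adj] {k : ℕ}

theorem IsRegularOfDegree.adjMatrix_mulVec_one (hreg : G.IsRegularOfDegree k) :
    G.adjMatrix ℝ *ᵥ 1 = (k : ℝ) • 1 := by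
  ext v
  simp [hreg v]

theorem Connected.apply_eq_apply_of_adjMatrix_mulVec_eq (hconn : G.Connected)
    (hreg : G.IsRegularOfDegree k) {x : V → ℝ} (hx : G.adjMatrix ℝ *ᵥ x = (k : ℝ) • x)
    (a b : V) : x a = x b := by
  classical
  have hlap : G.lapMatrix ℝ *ᵥ x = 0 := by
    ext v
    simp [lapMatrix, sub_mulVec, hx, degMatrix_mulVec_apply, hreg v]
  exact (G.lapMatrix_mulVec_eq_zero_iff_forall_reachable).mp hlap a b (hconn.preconnected a b)

theorem card_filter_adj_eq_dotProduct (S T : Finset V) :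
    (#{p ∈ S ×ˢ T | G.Adj p.1 p.2} : ℝ) =
      (S : Set V).indicator 1 ⬝ᵥ (G.adjMatrix ℝ *ᵥ (T : Set V).indicator 1) := by
  rw [dotProduct_comm, dotProduct_indicator_one, card_filter, sum_product]
  push_cast
  refine sum_congr rfl fun i _ => ?_
  rw [mulVec, dotProduct_indicator_one]
  simp [adjMatrix_apply]

end SimpleGraph

/-- Expander mixing lemma: if all adjacency eigenvalues of a connected non-bipartite
`k`-regular graph other than `k` have absolute value at most `lam`, then for all vertex
subsets `S, T`: `| |E(S,T)| - k|S||T|/n | ≤ lam·√(|S||T|)`, where `E(S,T)` is the set of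
ordered adjacent pairs. -/
theorem expander_mixing_lemma {V : Type*} [Fintype V] (k : ℕ)
    (X : SimpleGraph V) [DecidableRel X.Adj]
    (hconn : X.Connected) (hnb : ¬ X.IsBipartite') (hreg : X.IsRegularOfDegree k)
    (lam : ℝ)
    (hlam : ∀ l : ℝ, (X.adjMatrix ℝ).IsEigenvalue l → l ≠ (k : ℝ) → |l| ≤ lam)
    (S T : Finset V) :
    |(((S ×ˢ T).filter fun p => X.Adj p.1 p.2).card : ℝ)
        - (k : ℝ) * S.card * T.card / (Fintype.card V : ℝ)|
      ≤ lam * Real.sqrt ((S.card : ℝ) * T.card) := by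
  classical
  have hA := X.isHermitian_adjMatrix ℝ
  have : Nontrivial V := nontrivial_of_not_isBipartite' hnb
  obtain ⟨j₀, hj₀⟩ :=
    hA.exists_eigenvalues_eq_of_mulVec_eq_smul one_ne_zero hreg.adjMatrix_mulVec_one
  have hconst (j) (hj : hA.eigenvalues j = k) :
      ∀ a b, hA.eigenvectorBasis j a = hA.eigenvectorBasis j b :=
    hconn.apply_eq_apply_of_adjMatrix_mulVec_eq hreg (hj ▸ hA.mulVec_eigenvectorBasis j)
  have hbound (j) (hj : j ≠ j₀) : |hA.eigenvalues j| ≤ lam :=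
    hlam _ (hA.isEigenvalue_eigenvalues j) fun h =>
      hj (hA.eq_of_eigenvectorBasis_const (hconst j h) (hconst j₀ hj₀))
  obtain ⟨j₁, hj₁⟩ := exists_ne j₀
  have key := hA.abs_dotProduct_mulVec_sub_le ((abs_nonneg _).trans (hbound j₁ hj₁)) hbound
    ((S : Set V).indicator 1) ((T : Set V).indicator 1)
  rw [card_filter_adj_eq_dotProduct]
  convert key using 3
  · rw [dotProduct_mul_dotProduct_of_const (hconst j₀ hj₀)
      (by simpa using hA.eigenvectorBasis_dotProduct_eigenvectorBasis j₀ j₀),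
      sum_indicator_one, sum_indicator_one, hj₀]
    ring
  · rw [indicator_one_dotProduct_self, indicator_one_dotProduct_self]
end
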